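/- Let H₁, H₂, U, Y be complex Hilbert spaces and let M̂ = [[A₁₁, A₁₂, B₁], [A₂₁, A₂₂, B₂], [C₁, C₂, D]] : H₁ ⊕ H₂ ⊕ U → H₁ ⊕ H₂ ⊕ Y be a contraction, and let f̂(z,ζ) = D + [C₁ C₂]·diag(zI_{H₁}, ζI_{H₂})·(I − [[A₁₁,A₁₂],[A₂₁,A₂₂]]·diag(zI_{H₁}, ζI_{H₂}))⁻¹·[B₁; B₂] for (z,ζ) ∈ D². Set H = H₁ ⊕ H₂, A₁ = [[A₁₁, 0], [0, A₂₂]], A₂ = [[0, A₁₂], [A₂₁, 0]], B = (1/√2)·[B₁; B₂], C = (1/√2)·[C₁ C₂]. Then for every (z,ζ) ∈ D², D + [C C]·diag(zI_H, ζI_H)·(I − [[A₁,A₂],[A₂,A₁]]·diag(zI_H, ζI_H))⁻¹·[B; B] = (1/2)·(f̂(z,ζ) + f̂(ζ,z)). -/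
import Mathlib


noncomputable section

open ContinuousLinearMap

/-- The open bidisk `𝔻² = {(z,ζ) : |z| < 1, |ζ| < 1}`. -/
def bidisk : Set (ℂ × ℂ) := {w : ℂ × ℂ | ‖w.1‖ < 1 ∧ ‖w.2‖ < 1}

section Defs

variable {H H₁ H₂ U Y : Type*}
  [NormedAddCommGroup H] [NormedSpace ℂ H]
  [NormedAddCommGroup H₁] [NormedSpace ℂ H₁]
  [NormedAddCommGroup H₂] [NormedSpace ℂ H₂]
  [NormedAddCommGroup U] [NormedSpace ℂ U]
  [NormedAddCommGroup Y] [NormedSpace ℂ Y]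

/-- The block diagonal operator `diag(z I_{H₁}, ζ I_{H₂})` acting on `H₁ ⊕ H₂`. -/
def diagOp₂ (z ζ : ℂ) : (H₁ × H₂) →L[ℂ] (H₁ × H₂) :=
  (z • ContinuousLinearMap.id ℂ H₁).prodMap (ζ • ContinuousLinearMap.id ℂ H₂)

/-- The transfer function of a general colligation with state space `H₁ ⊕ H₂`:
`D + [C₁ C₂] ⬝ diag(zI,ζI) ⬝ (I - [[A₁₁,A₁₂],[A₂₁,A₂₂]] ⬝ diag(zI,ζI))⁻¹ ⬝ [B₁;B₂]`. -/
def hatTransfer (A₁₁ : H₁ →L[ℂ] H₁) (A₁₂ : H₂ →L[ℂ] H₁) (A₂₁ : H₁ →L[ℂ] H₂)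
    (A₂₂ : H₂ →L[ℂ] H₂) (B₁ : U →L[ℂ] H₁) (B₂ : U →L[ℂ] H₂) (C₁ : H₁ →L[ℂ] Y)
    (C₂ : H₂ →L[ℂ] Y) (D : U →L[ℂ] Y) (z ζ : ℂ) : U →L[ℂ] Y :=
  D + (C₁.coprod C₂) ∘L diagOp₂ z ζ ∘L
    Ring.inverse (1 - (A₁₁.coprod A₁₂).prod (A₂₁.coprod A₂₂) * diagOp₂ z ζ) ∘L
      (B₁.prod B₂)

/-- The block operator `[[A₁, A₂], [A₂, A₁]]` acting on `H ⊕ H`. -/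
def symBlock (A₁ A₂ : H →L[ℂ] H) : (H × H) →L[ℂ] (H × H) :=
  (A₁.coprod A₂).prod (A₂.coprod A₁)

/-- The block diagonal operator `diag(z I_H, ζ I_H)` acting on `H ⊕ H`. -/
def diagOp (z ζ : ℂ) : (H × H) →L[ℂ] (H × H) :=
  (z • ContinuousLinearMap.id ℂ H).prodMap (ζ • ContinuousLinearMap.id ℂ H)

/-- The transfer function
`D + [C C] ⬝ diag(zI,ζI) ⬝ (I - [[A₁,A₂],[A₂,A₁]] ⬝ diag(zI,ζI))⁻¹ ⬝ [B;B]`. -/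
def symTransfer (A₁ A₂ : H →L[ℂ] H) (B : U →L[ℂ] H) (C : H →L[ℂ] Y) (D : U →L[ℂ] Y)
    (z ζ : ℂ) : U →L[ℂ] Y :=
  D + (C.coprod C) ∘L diagOp z ζ ∘L
    Ring.inverse (1 - symBlock A₁ A₂ * diagOp z ζ) ∘L (B.prod B)

end Defs

section AuxA
variable {H₁ H₂ : Type*}
  [NormedAddCommGroup H₁] [NormedSpace ℂ H₁]
  [NormedAddCommGroup H₂] [NormedSpace ℂ H₂]

/-- the permutation ((a,b),(c,d)) ↦ ((a,d),(c,b)) -/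
def swapE : ((H₁ × H₂) × (H₁ × H₂)) →L[ℂ] ((H₁ × H₂) × (H₁ × H₂)) :=
  (((fst ℂ H₁ H₂).comp (fst ℂ (H₁ × H₂) (H₁ × H₂))).prod
      ((snd ℂ H₁ H₂).comp (snd ℂ (H₁ × H₂) (H₁ × H₂)))).prod
    (((fst ℂ H₁ H₂).comp (snd ℂ (H₁ × H₂) (H₁ × H₂))).prod
      ((snd ℂ H₁ H₂).comp (fst ℂ (H₁ × H₂) (H₁ × H₂))))

@[simp] lemma swapE_apply (p : (H₁ × H₂) × (H₁ × H₂)) :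
    swapE p = ((p.1.1, p.2.2), (p.2.1, p.1.2)) := rfl

lemma swapE_mul_swapE : (swapE (H₁ := H₁) (H₂ := H₂)) * swapE = 1 :=
  ContinuousLinearMap.ext fun _ => rfl

end AuxA

section AuxB
variable {X Y : Type*}
  [NormedAddCommGroup X] [NormedSpace ℂ X]
  [NormedAddCommGroup Y] [NormedSpace ℂ Y]

lemma prodMap_mul (a c : X →L[ℂ] X) (b d : Y →L[ℂ] Y) :
    (a.prodMap b) * (c.prodMap d) = (a * c).prodMap (b * d) :=
  ContinuousLinearMap.ext fun _ => rfl

lemma prodMap_one' : (1 : X →L[ℂ] X).prodMap (1 : Y →L[ℂ] Y) = 1 :=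
  ContinuousLinearMap.ext fun _ => rfl

lemma one_sub_prodMap (a : X →L[ℂ] X) (b : Y →L[ℂ] Y) :
    1 - a.prodMap b = (1 - a).prodMap (1 - b) :=
  ContinuousLinearMap.ext fun _ => rfl

end AuxB

section AuxC
variable {H₁ H₂ : Type*}
  [NormedAddCommGroup H₁] [NormedSpace ℂ H₁] [CompleteSpace H₁]
  [NormedAddCommGroup H₂] [NormedSpace ℂ H₂] [CompleteSpace H₂]

lemma isUnit_one_sub_of_sq (N : (H₁ × H₂) →L[ℂ] (H₁ × H₂)) (r : ℝ) (hr0 : 0 ≤ r) (hr : r < 1)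
    (h : ∀ p : H₁ × H₂, ‖(N p).1‖ ^ 2 + ‖(N p).2‖ ^ 2 ≤ r ^ 2 * (‖p.1‖ ^ 2 + ‖p.2‖ ^ 2)) :
    IsUnit (1 - N) := by
  have hpow : ∀ (k : ℕ) (p : H₁ × H₂),
      ‖((N ^ k) p).1‖ ^ 2 + ‖((N ^ k) p).2‖ ^ 2 ≤ r ^ (2 * k) * (‖p.1‖ ^ 2 + ‖p.2‖ ^ 2) := by
    intro k
    induction k with
    | zero => intro p; simp
    | succ k ih =>
      intro p
      have h1 : (N ^ (k + 1)) p = N ((N ^ k) p) := by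
        rw [pow_succ']; rfl
      rw [h1]
      calc ‖(N ((N ^ k) p)).1‖ ^ 2 + ‖(N ((N ^ k) p)).2‖ ^ 2
          ≤ r ^ 2 * (‖((N ^ k) p).1‖ ^ 2 + ‖((N ^ k) p).2‖ ^ 2) := h _
        _ ≤ r ^ 2 * (r ^ (2 * k) * (‖p.1‖ ^ 2 + ‖p.2‖ ^ 2)) :=
            mul_le_mul_of_nonneg_left (ih p) (by positivity)
        _ = r ^ (2 * (k + 1)) * (‖p.1‖ ^ 2 + ‖p.2‖ ^ 2) := by ring
  have hnorm : ∀ k : ℕ, ‖N ^ k‖ ≤ Real.sqrt 2 * r ^ k := by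
    intro k
    apply opNorm_le_bound _ (by positivity)
    intro p
    have hsq : ‖(N ^ k) p‖ ^ 2 ≤ 2 * (r ^ k * ‖p‖) ^ 2 := by
      have h2 : ‖(N ^ k) p‖ ^ 2 ≤ ‖((N ^ k) p).1‖ ^ 2 + ‖((N ^ k) p).2‖ ^ 2 := by
        rcases le_total ‖((N ^ k) p).1‖ ‖((N ^ k) p).2‖ with hle | hle
        · have : ‖(N ^ k) p‖ = max ‖((N ^ k) p).1‖ ‖((N ^ k) p).2‖ := rfl
          rw [this, max_eq_right hle]; nlinarith [norm_nonneg ((N ^ k) p).1]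
        · have : ‖(N ^ k) p‖ = max ‖((N ^ k) p).1‖ ‖((N ^ k) p).2‖ := rfl
          rw [this, max_eq_left hle]; nlinarith [norm_nonneg ((N ^ k) p).2]
      have h3 : ‖p.1‖ ^ 2 + ‖p.2‖ ^ 2 ≤ 2 * ‖p‖ ^ 2 := by
        have := norm_fst_le p
        have := norm_snd_le p
        nlinarith [norm_nonneg p.1, norm_nonneg p.2]
      have h4 := hpow k p
      have h5 : r ^ (2 * k) = (r ^ k) ^ 2 := by rw [← pow_mul, mul_comm]
      nlinarith [pow_nonneg hr0 k, sq_nonneg (r ^ k)]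
    calc ‖(N ^ k) p‖ = Real.sqrt (‖(N ^ k) p‖ ^ 2) := (Real.sqrt_sq (norm_nonneg _)).symm
      _ ≤ Real.sqrt (2 * (r ^ k * ‖p‖) ^ 2) := Real.sqrt_le_sqrt hsq
      _ = Real.sqrt 2 * (r ^ k * ‖p‖) := by
          rw [Real.sqrt_mul (by norm_num), Real.sqrt_sq (by positivity)]
      _ = Real.sqrt 2 * r ^ k * ‖p‖ := by ring
  obtain ⟨k, hk⟩ : ∃ k : ℕ, r ^ k < (Real.sqrt 2)⁻¹ :=
    exists_pow_lt_of_lt_one (by positivity) hr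
  have hlt : ‖N ^ k‖ < 1 := by
    refine lt_of_le_of_lt (hnorm k) ?_
    have h2 : (0:ℝ) < Real.sqrt 2 := by positivity
    calc Real.sqrt 2 * r ^ k < Real.sqrt 2 * (Real.sqrt 2)⁻¹ :=
          mul_lt_mul_of_pos_left hk h2
      _ = 1 := mul_inv_cancel₀ (ne_of_gt h2)
  obtain ⟨u, hu_eq⟩ : IsUnit (1 - N ^ k) := isUnit_one_sub_of_norm_lt_one hlt
  set g : (H₁ × H₂) →L[ℂ] (H₁ × H₂) := ∑ i ∈ Finset.range k, N ^ i with hg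
  have h1 : (1 - N) * g = 1 - N ^ k := mul_neg_geom_sum N k
  have h2 : g * (1 - N) = 1 - N ^ k := geom_sum_mul_neg N k
  have hcomm : Commute (1 - N) (1 - N ^ k) :=
    ((Commute.one_left (1 - N ^ k)).sub_left
      ((Commute.one_right N).sub_right ((Commute.refl N).pow_right k)))
  have hcu : Commute (1 - N) (↑u⁻¹ : (H₁ × H₂) →L[ℂ] (H₁ × H₂)) := by
    have : Commute (1 - N) (↑u : (H₁ × H₂) →L[ℂ] (H₁ × H₂)) := hu_eq ▸ hcomm
    exact this.units_inv_right
  refine ⟨⟨1 - N, g * ↑u⁻¹, ?_, ?_⟩, rfl⟩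
  · rw [← mul_assoc, h1, ← hu_eq, Units.mul_inv]
  · rw [mul_assoc, ← hcu.eq, ← mul_assoc, h2, ← hu_eq, Units.mul_inv]

end AuxC


variable {H₁ H₂ U Y : Type*}
  [NormedAddCommGroup H₁] [InnerProductSpace ℂ H₁] [CompleteSpace H₁]
  [NormedAddCommGroup H₂] [InnerProductSpace ℂ H₂] [CompleteSpace H₂]
  [NormedAddCommGroup U] [InnerProductSpace ℂ U] [CompleteSpace U]
  [NormedAddCommGroup Y] [InnerProductSpace ℂ Y] [CompleteSpace Y]

/-- The colligation `M̂ = [[A₁₁,A₁₂,B₁],[A₂₁,A₂₂,B₂],[C₁,C₂,D]] : H₁ ⊕ H₂ ⊕ U → H₁ ⊕ H₂ ⊕ Y`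
is a contraction (with respect to the Hilbert space direct sum norms). -/
def HatColligationContractive (A₁₁ : H₁ →L[ℂ] H₁) (A₁₂ : H₂ →L[ℂ] H₁) (A₂₁ : H₁ →L[ℂ] H₂)
    (A₂₂ : H₂ →L[ℂ] H₂) (B₁ : U →L[ℂ] H₁) (B₂ : U →L[ℂ] H₂) (C₁ : H₁ →L[ℂ] Y)
    (C₂ : H₂ →L[ℂ] Y) (D : U →L[ℂ] Y) : Prop :=
  ∀ (h₁ : H₁) (h₂ : H₂) (u : U),
    ‖A₁₁ h₁ + A₁₂ h₂ + B₁ u‖ ^ 2 + ‖A₂₁ h₁ + A₂₂ h₂ + B₂ u‖ ^ 2 +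
        ‖C₁ h₁ + C₂ h₂ + D u‖ ^ 2 ≤
      ‖h₁‖ ^ 2 + ‖h₂‖ ^ 2 + ‖u‖ ^ 2

set_option maxHeartbeats 1000000

theorem symmetrized_colligation_transfer_eq_symmetrization (A₁₁ : H₁ →L[ℂ] H₁)
    (A₁₂ : H₂ →L[ℂ] H₁) (A₂₁ : H₁ →L[ℂ] H₂) (A₂₂ : H₂ →L[ℂ] H₂) (B₁ : U →L[ℂ] H₁)
    (B₂ : U →L[ℂ] H₂) (C₁ : H₁ →L[ℂ] Y) (C₂ : H₂ →L[ℂ] Y) (D : U →L[ℂ] Y)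
    (hM : HatColligationContractive A₁₁ A₁₂ A₂₁ A₂₂ B₁ B₂ C₁ C₂ D) :
    ∀ w ∈ bidisk,
      symTransfer
        (A₁₁.prodMap A₂₂)
        ((A₁₂.comp (ContinuousLinearMap.snd ℂ H₁ H₂)).prod
          (A₂₁.comp (ContinuousLinearMap.fst ℂ H₁ H₂)))
        ((Real.sqrt 2 : ℂ)⁻¹ • (B₁.prod B₂))
        ((Real.sqrt 2 : ℂ)⁻¹ • (C₁.coprod C₂)) D w.1 w.2 =
      (2 : ℂ)⁻¹ •
        (hatTransfer A₁₁ A₁₂ A₂₁ A₂₂ B₁ B₂ C₁ C₂ D w.1 w.2 +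
          hatTransfer A₁₁ A₁₂ A₂₁ A₂₂ B₁ B₂ C₁ C₂ D w.2 w.1) := by
  rintro ⟨z, ζ⟩ ⟨hz, hζ⟩
  simp only at hz hζ ⊢
  set Mh : (H₁ × H₂) →L[ℂ] (H₁ × H₂) := (A₁₁.coprod A₁₂).prod (A₂₁.coprod A₂₂) with hMh
  set r : ℝ := max ‖z‖ ‖ζ‖ with hrdef
  have hr0 : 0 ≤ r := le_trans (norm_nonneg z) (le_max_left _ _)
  have hr : r < 1 := max_lt hz hζ
  -- squared contraction estimate
  have key : ∀ z' ζ' : ℂ, ‖z'‖ ≤ r → ‖ζ'‖ ≤ r → ∀ p : H₁ × H₂,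
      ‖(((Mh * diagOp₂ z' ζ' : (H₁ × H₂) →L[ℂ] (H₁ × H₂))) p).1‖ ^ 2 +
          ‖(((Mh * diagOp₂ z' ζ' : (H₁ × H₂) →L[ℂ] (H₁ × H₂))) p).2‖ ^ 2 ≤
        r ^ 2 * (‖p.1‖ ^ 2 + ‖p.2‖ ^ 2) := by
    intro z' ζ' hz' hζ' p
    have happ : ((Mh * diagOp₂ z' ζ' : (H₁ × H₂) →L[ℂ] (H₁ × H₂))) p =
        (A₁₁ (z' • p.1) + A₁₂ (ζ' • p.2), A₂₁ (z' • p.1) + A₂₂ (ζ' • p.2)) := rfl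
    rw [happ]
    dsimp only
    have hc := hM (z' • p.1) (ζ' • p.2) 0
    simp only [map_zero, add_zero, norm_zero] at hc
    rw [norm_smul, norm_smul, mul_pow, mul_pow] at hc
    have hC : 0 ≤ ‖C₁ (z' • p.1) + C₂ (ζ' • p.2)‖ ^ 2 := sq_nonneg _
    have hz2 : ‖z'‖ ^ 2 * ‖p.1‖ ^ 2 ≤ r ^ 2 * ‖p.1‖ ^ 2 :=
      mul_le_mul_of_nonneg_right (pow_le_pow_left₀ (norm_nonneg _) hz' 2) (sq_nonneg _)
    have hζ2 : ‖ζ'‖ ^ 2 * ‖p.2‖ ^ 2 ≤ r ^ 2 * ‖p.2‖ ^ 2 :=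
      mul_le_mul_of_nonneg_right (pow_le_pow_left₀ (norm_nonneg _) hζ' 2) (sq_nonneg _)
    nlinarith [hc, hC, hz2, hζ2]
  set N₁ : (H₁ × H₂) →L[ℂ] (H₁ × H₂) := Mh * diagOp₂ z ζ with hN₁
  set N₂ : (H₁ × H₂) →L[ℂ] (H₁ × H₂) := Mh * diagOp₂ ζ z with hN₂
  have hu₁ : IsUnit (1 - N₁) :=
    isUnit_one_sub_of_sq _ r hr0 hr (key z ζ (le_max_left _ _) (le_max_right _ _))
  have hu₂ : IsUnit (1 - N₂) :=
    isUnit_one_sub_of_sq _ r hr0 hr (key ζ z (le_max_right _ _) (le_max_left _ _))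
  set A₁ : (H₁ × H₂) →L[ℂ] (H₁ × H₂) := A₁₁.prodMap A₂₂ with hA₁
  set A₂ : (H₁ × H₂) →L[ℂ] (H₁ × H₂) :=
    (A₁₂.comp (ContinuousLinearMap.snd ℂ H₁ H₂)).prod
      (A₂₁.comp (ContinuousLinearMap.fst ℂ H₁ H₂)) with hA₂
  set E := swapE (H₁ := H₁) (H₂ := H₂) with hE
  have hEE : E * E = 1 := swapE_mul_swapE
  have hconj : E * (symBlock A₁ A₂ * diagOp z ζ) * E = N₁.prodMap N₂ := by
    refine ContinuousLinearMap.ext fun p => Prod.ext (Prod.ext ?_ ?_) (Prod.ext ?_ ?_) <;>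
        simp only [hE, hN₁, hN₂, hA₁, hA₂, hMh, ContinuousLinearMap.mul_apply, swapE_apply,
          symBlock, diagOp, diagOp₂, coe_prodMap', Prod.map_apply, prod_apply, coprod_apply,
          ContinuousLinearMap.comp_apply, coe_fst', coe_snd', ContinuousLinearMap.smul_apply,
          ContinuousLinearMap.coe_id', id_eq, Prod.smul_fst, Prod.smul_snd, Prod.smul_mk,
          Prod.map_fst, Prod.map_snd, Prod.fst_add, Prod.snd_add] <;>
      abel
  have ha : 1 - symBlock A₁ A₂ * diagOp z ζ = E * ((1 - N₁).prodMap (1 - N₂)) * E := by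
    have hS : symBlock A₁ A₂ * diagOp z ζ = E * (N₁.prodMap N₂) * E := by
      calc symBlock A₁ A₂ * diagOp z ζ
          = (E * E) * (symBlock A₁ A₂ * diagOp z ζ) * (E * E) := by rw [hEE, one_mul, mul_one]
        _ = E * (E * (symBlock A₁ A₂ * diagOp z ζ) * E) * E := by
            simp only [mul_assoc]
        _ = E * (N₁.prodMap N₂) * E := by rw [hconj]
    rw [← one_sub_prodMap, hS, mul_sub, mul_one, sub_mul, hEE]
  set R₁ : (H₁ × H₂) →L[ℂ] (H₁ × H₂) := Ring.inverse (1 - N₁) with hR₁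
  set R₂ : (H₁ × H₂) →L[ℂ] (H₁ × H₂) := Ring.inverse (1 - N₂) with hR₂
  have conjmul : ∀ P R : ((H₁ × H₂) × (H₁ × H₂)) →L[ℂ] ((H₁ × H₂) × (H₁ × H₂)),
      P * R = 1 → (E * P * E) * (E * R * E) = 1 := by
    intro P R h
    have e1 : (E * P * E) * (E * R * E) = E * P * (E * E) * R * E := by
      simp only [mul_assoc]
    rw [e1, hEE, mul_one, mul_assoc E P R, h, mul_one, hEE]
  have hP1 : ((1 - N₁).prodMap (1 - N₂)) * (R₁.prodMap R₂) = 1 := by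
    rw [prodMap_mul, hR₁, hR₂, Ring.mul_inverse_cancel _ hu₁, Ring.mul_inverse_cancel _ hu₂,
      prodMap_one']
  have hP2 : (R₁.prodMap R₂) * ((1 - N₁).prodMap (1 - N₂)) = 1 := by
    rw [prodMap_mul, hR₁, hR₂, Ring.inverse_mul_cancel _ hu₁, Ring.inverse_mul_cancel _ hu₂,
      prodMap_one']
  have hab : (1 - symBlock A₁ A₂ * diagOp z ζ) * (E * R₁.prodMap R₂ * E) = 1 := by
    rw [ha]; exact conjmul _ _ hP1
  have hba : (E * R₁.prodMap R₂ * E) * (1 - symBlock A₁ A₂ * diagOp z ζ) = 1 := by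
    rw [ha]; exact conjmul _ _ hP2
  have hinv : Ring.inverse (1 - symBlock A₁ A₂ * diagOp z ζ) = E * R₁.prodMap R₂ * E :=
    Ring.inverse_unit ⟨1 - symBlock A₁ A₂ * diagOp z ζ, E * R₁.prodMap R₂ * E, hab, hba⟩
  -- final assembly
  have hs2 : ((Real.sqrt 2 : ℂ))⁻¹ * ((Real.sqrt 2 : ℂ))⁻¹ = (2 : ℂ)⁻¹ := by
    rw [← mul_inv, ← Complex.ofReal_mul, Real.mul_self_sqrt (by norm_num)]
    norm_num
  simp only [symTransfer, hatTransfer]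
  rw [← hMh, ← hN₁, ← hN₂, ← hR₁, ← hR₂, hinv]
  ext u
  simp only [ContinuousLinearMap.add_apply, ContinuousLinearMap.comp_apply,
    ContinuousLinearMap.smul_apply, ContinuousLinearMap.prod_apply,
    ContinuousLinearMap.coprod_apply, ContinuousLinearMap.mul_apply,
    ContinuousLinearMap.coe_prodMap', Prod.map_apply, Prod.map_fst, Prod.map_snd,
    swapE_apply, hE, diagOp, diagOp₂, ContinuousLinearMap.id_apply, map_smul,
    Prod.smul_fst, Prod.smul_snd, smul_smul, smul_add]
  rw [show ((((Real.sqrt 2 : ℝ) : ℂ))⁻¹ • B₁ u, (((Real.sqrt 2 : ℝ) : ℂ))⁻¹ • B₂ u) =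
      (((Real.sqrt 2 : ℝ) : ℂ))⁻¹ • ((B₁ u, B₂ u) : H₁ × H₂) from rfl]
  simp only [map_smul, Prod.smul_fst, Prod.smul_snd, smul_smul, smul_add]
  match_scalars
  all_goals first
    | linear_combination z * hs2
    | linear_combination ζ * hs2
    | linear_combination hs2
    | ring1
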